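/- arXiv:2009.06004 — 2 statements merged into one kernel-verified Lean document; each statement's English description precedes it below -/
import Mathlib

section
/- For every integer n ≥ 3 and every integer m with 1 ≤ m ≤ n/3, there exists an absolute constant c > 0 (independent of n and m) such that ∑_{k=2}^{n−m} 1/((n−k)^{3/2}·√(k−1)) ≤ c/(√n·√m). -/
/-!
Write the `k`-th term as `1 / (a ^ (3/2) * √b)` with `a = n - k ≥ m` and `b = k - 1`.
Since `a + b = n - 1 ≥ n / 2`, one of `a`, `b` is at least `t = n / 4`, so the term is at most
`t ^ (-3/2) / √b + t ^ (-1/2) / a ^ (3/2)`. Both resulting sums telescope: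
`∑ 1 / √(k - 1) ≤ 2 √n` and `∑_{j ≥ m} j ^ (-3/2) ≤ 4 / √m`, giving
`16 / n + 8 / √(n m) ≤ 24 / √(n m)`.
-/

open Finset Real

lemma rpow_three_halves_eq_mul_sqrt {x : ℝ} (hx : 0 ≤ x) : x ^ ((3 : ℝ) / 2) = x * √x := by
  rw [show (3 : ℝ) / 2 = 1 + 1 / 2 by norm_num, rpow_add' hx (by norm_num), rpow_one,
    ← sqrt_eq_rpow]

lemma one_div_sqrt_le_two_mul_sub {x : ℝ} (hx : 1 ≤ x) :
    1 / √x ≤ 2 * √x - 2 * √(x - 1) := by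
  have hx0 : 0 < √x := sqrt_pos.mpr (by linarith)
  rw [div_le_iff₀ hx0]
  nlinarith [sq_nonneg (√x - √(x - 1)), sq_sqrt (by linarith : 0 ≤ x),
    sq_sqrt (by linarith : 0 ≤ x - 1)]

lemma sum_Icc_one_div_sqrt_sub_one_le {N : ℕ} (hN : 2 ≤ N) :
    ∑ k ∈ Icc 2 N, 1 / √((k : ℝ) - 1) ≤ 2 * √((N : ℝ) - 1) := by
  calc ∑ k ∈ Icc 2 N, 1 / √((k : ℝ) - 1)
      ≤ ∑ k ∈ Icc 2 N, (2 * √(((k + 1 : ℕ) : ℝ) - 2) - 2 * √((k : ℝ) - 2)) := by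
        refine sum_le_sum fun k hk => ?_
        have hk : (2 : ℝ) ≤ k := by exact_mod_cast (mem_Icc.mp hk).1
        have := one_div_sqrt_le_two_mul_sub (x := (k : ℝ) - 1) (by linarith)
        push_cast
        rwa [show (k : ℝ) + 1 - 2 = k - 1 by ring, show (k : ℝ) - 2 = k - 1 - 1 by ring]
    _ = 2 * √((N : ℝ) - 1) := by
        rw [sum_Icc_sub hN (fun k => 2 * √((k : ℝ) - 2))]
        push_cast
        ring_nf

-- With `2` in place of `4` this fails at `x = 1`.
lemma one_div_mul_sqrt_le_sub {x : ℝ} (hx : 1 ≤ x) :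
    1 / (x * √x) ≤ 4 / √x - 4 / √(x + 1) := by
  obtain ⟨a, ha, rfl⟩ : ∃ a, 1 ≤ a ∧ x = a ^ 2 :=
    ⟨√x, one_le_sqrt.mpr hx, (sq_sqrt (by linarith)).symm⟩
  rw [sqrt_sq (by linarith)]
  set b := √(a ^ 2 + 1)
  have hb2 : b ^ 2 = a ^ 2 + 1 := sq_sqrt (by positivity)
  have hab : a ≤ b := le_sqrt_of_sq_le (by linarith)
  have hb : b * (a + b) ≤ 4 * a ^ 2 := by nlinarith
  rw [div_sub_div _ _ (by positivity) (by positivity),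
    div_le_div_iff₀ (by positivity) (by positivity)]
  nlinarith [mul_le_mul_of_nonneg_left hb (by nlinarith : 0 ≤ a * (b - a))]

lemma sum_Ico_one_div_mul_sqrt_le {m : ℕ} (hm : 1 ≤ m) (N : ℕ) :
    ∑ j ∈ Ico m N, 1 / ((j : ℝ) * √j) ≤ 4 / √m := by
  rcases le_or_gt m N with hmN | hNm
  · calc ∑ j ∈ Ico m N, 1 / ((j : ℝ) * √j)
        ≤ ∑ j ∈ Ico m N, (-(4 / √((j + 1 : ℕ) : ℝ)) - -(4 / √(j : ℝ))) := by
          refine sum_le_sum fun j hj => ?_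
          have hj : (1 : ℝ) ≤ j := by exact_mod_cast hm.trans (mem_Ico.mp hj).1
          push_cast
          linarith [one_div_mul_sqrt_le_sub hj]
      _ = 4 / √m - 4 / √N := by
          rw [sum_Ico_sub (fun j => -(4 / √(j : ℝ))) hmN]
          ring
      _ ≤ 4 / √m := by
          linarith [show 0 ≤ 4 / √(N : ℝ) by positivity]
  · rw [Ico_eq_empty_of_le hNm.le, sum_empty]
    positivity

lemma one_div_mul_sqrt_mul_sqrt_le {a b t : ℝ} (ha : 0 < a) (hb : 0 < b) (ht : 0 < t)
    (habt : 2 * t ≤ a + b) :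
    1 / (a * √a * √b) ≤ 1 / √b / (t * √t) + 1 / (a * √a) / √t := by
  rw [div_div, div_div, mul_comm (√b)]
  rcases le_or_gt t a with hta | hat
  · have : 1 / (a * √a * √b) ≤ 1 / (t * √t * √b) :=
      one_div_le_one_div_of_le (by positivity) (by gcongr)
    linarith [show 0 ≤ 1 / (a * √a * √t) by positivity]
  · have : 1 / (a * √a * √b) ≤ 1 / (a * √a * √t) :=
      one_div_le_one_div_of_le (by positivity) (by gcongr; linarith)
    linarith [show 0 ≤ 1 / (t * √t * √b) by positivity]

lemma sum_Icc_one_div_mul_sqrt_nat_sub_le {n m : ℕ} (hm : 1 ≤ m) (hmn : m ≤ n) :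
    ∑ k ∈ Icc 2 (n - m), 1 / (((n : ℝ) - k) * √((n : ℝ) - k)) ≤ 4 / √m := by
  have hreflect : ∑ k ∈ Icc 2 (n - m), 1 / (((n : ℝ) - k) * √((n : ℝ) - k)) =
      ∑ j ∈ Ico m (n - 1), 1 / ((j : ℝ) * √j) := by
    rw [← Ico_add_one_right_eq_Icc]
    calc ∑ k ∈ Ico 2 (n - m + 1), 1 / (((n : ℝ) - k) * √((n : ℝ) - k))
        = ∑ k ∈ Ico 2 (n - m + 1), 1 / (((n - k : ℕ) : ℝ) * √((n - k : ℕ) : ℝ)) := by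
          refine sum_congr rfl fun k hk => ?_
          rw [Nat.cast_sub (by have := (mem_Ico.mp hk).2; omega)]
      _ = ∑ j ∈ Ico (n + 1 - (n - m + 1)) (n + 1 - 2), 1 / ((j : ℝ) * √j) :=
          sum_Ico_reflect (fun j : ℕ => 1 / ((j : ℝ) * √j)) 2 (by omega)
      _ = ∑ j ∈ Ico m (n - 1), 1 / ((j : ℝ) * √j) := by
          rw [show n + 1 - (n - m + 1) = m by omega, show n + 1 - 2 = n - 1 by omega]
  exact hreflect ▸ sum_Ico_one_div_mul_sqrt_le hm (n - 1)

lemma one_div_rpow_mul_sqrt_le {n k : ℕ} (hk : 2 ≤ k) (hkn : k < n) :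
    1 / (((n : ℝ) - k) ^ ((3 : ℝ) / 2) * √((k : ℝ) - 1)) ≤
      1 / √((k : ℝ) - 1) / (n / 4 * √(n / 4)) + 1 / ((n - k) * √(n - k)) / √(n / 4) := by
  have hkR : (2 : ℝ) ≤ k := by exact_mod_cast hk
  have hknR : (k : ℝ) + 1 ≤ n := by exact_mod_cast hkn
  rw [rpow_three_halves_eq_mul_sqrt (by linarith)]
  exact one_div_mul_sqrt_mul_sqrt_le (by linarith) (by linarith) (by linarith) (by linarith)

/-- There is an absolute constant `c > 0` such that for all integers `n ≥ 3` and
`1 ≤ m ≤ n/3`, `∑_{k=2}^{n−m} 1/((n−k)^{3/2}·√(k−1)) ≤ c/(√n·√m)`. -/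
theorem stmt7 : ∃ c : ℝ, 0 < c ∧ ∀ n m : ℕ, 3 ≤ n → 1 ≤ m → 3 * m ≤ n →
    ∑ k ∈ Finset.Icc 2 (n - m),
        (1 : ℝ) / ((((n : ℝ) - (k : ℝ)) ^ ((3 : ℝ) / 2)) * Real.sqrt ((k : ℝ) - 1)) ≤
      c / (Real.sqrt n * Real.sqrt m) := by
  refine ⟨24, by norm_num, fun n m hn hm hmn => ?_⟩
  have hhead : ∑ k ∈ Icc 2 (n - m), 1 / √((k : ℝ) - 1) ≤ 2 * √n := by
    refine (sum_Icc_one_div_sqrt_sub_one_le (by omega)).trans ?_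
    have : ((n - m : ℕ) : ℝ) ≤ n := by exact_mod_cast Nat.sub_le n m
    gcongr
    linarith
  have hsm : √(m : ℝ) ≤ √n := sqrt_le_sqrt (by exact_mod_cast (by omega : m ≤ n))
  calc _ ≤ _ := sum_le_sum fun k hk =>
        one_div_rpow_mul_sqrt_le (mem_Icc.mp hk).1 (by have := (mem_Icc.mp hk).2; omega)
    _ = (∑ k ∈ Icc 2 (n - m), 1 / √((k : ℝ) - 1)) / (n / 4 * √(n / 4)) +
          (∑ k ∈ Icc 2 (n - m), 1 / (((n : ℝ) - k) * √((n : ℝ) - k))) / √(n / 4) := by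
        rw [sum_add_distrib, sum_div, sum_div]
    _ ≤ 2 * √n / (n / 4 * √(n / 4)) + 4 / √m / √(n / 4) := by
        gcongr
        exact sum_Icc_one_div_mul_sqrt_nat_sub_le hm (by omega)
    _ = 16 / (√n * √n) + 8 / (√n * √m) := by
        have hsqrt : √((n : ℝ) / 4) = √n / 2 := by
          rw [sqrt_div' _ (by norm_num), show (4 : ℝ) = 2 ^ 2 by norm_num, sqrt_sq (by norm_num)]
        rw [hsqrt, mul_self_sqrt (Nat.cast_nonneg n)]
        field_simp
        ring
    _ ≤ 16 / (√n * √m) + 8 / (√n * √m) := by gcongr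
    _ = 24 / (√n * √m) := by ring
end

section
/- There is an absolute constant c > 0 such that for all n, p ≥ 1 and ε > 0, if ε̄ = 4ε√(log(pn)) and A = ∏_{j=1}^p [a_j, b_j], then for every s ∈ ℝ^p satisfying s ∉ ∂A(ε̄) (with ∂A(ε̄) the ℓ∞ boundary set of width 2ε̄), the sum of absolute values of all third-order partial derivatives of φ_ε(·, A) at s is at most c/(ε³·p·n). -/
open MeasureTheory

/-- `log(t) = max{ln t, 1}` (the paper's convention). -/
noncomputable def Log (t : ℝ) : ℝ := max (Real.log t) 1

/-- The standard Gaussian density. -/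
noncomputable def stdGaussianPDF (x : ℝ) : ℝ := Real.exp (-x ^ 2 / 2) / Real.sqrt (2 * Real.pi)

/-- The standard Gaussian CDF. -/
noncomputable def stdGaussianCDF (x : ℝ) : ℝ := ∫ t in Set.Iic x, stdGaussianPDF t

/-- Partial derivative in the `j`-th coordinate. -/
noncomputable def pderiv {p : ℕ} (j : Fin p) (f : (Fin p → ℝ) → ℝ) : (Fin p → ℝ) → ℝ :=
  fun s => deriv (fun t => f (Function.update s j t)) (s j)

/-- The smoothed indicator `φ_ε(·, A)` of `A = ∏_j [a_j, b_j]`. -/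
noncomputable def smoothedInd {p : ℕ} (ε : ℝ) (a b : Fin p → ℝ) : (Fin p → ℝ) → ℝ :=
  fun s => ∏ j, (stdGaussianCDF ((b j - s j) / ε) - stdGaussianCDF ((a j - s j) / ε))

/-- Outer `t`-neighborhood (w.r.t. the `ℓ∞` norm on `Fin p → ℝ`). -/
noncomputable def outerNbhd {E : Type*} [NormedAddCommGroup E] (A : Set E) (t : ℝ) : Set E :=
  {x | Metric.infDist x A ≤ t}

/-- Inner `t`-neighborhood. -/
def innerNbhd {E : Type*} [NormedAddCommGroup E] (A : Set E) (t : ℝ) : Set E :=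
  {x ∈ A | Metric.closedBall x t ⊆ A}

/-- Boundary set `∂A(t) = A^t \ A^{-t}`. -/
noncomputable def bdry {E : Type*} [NormedAddCommGroup E] (A : Set E) (t : ℝ) : Set E :=
  outerNbhd A t \ innerNbhd A t

/-!
Every third partial derivative of `φ_ε(·, A)` is a product over the coordinates of derivatives
of orders `m_i`, `∑ m_i = 3`, of the factors `t ↦ Φ((b_i - t)/ε) - Φ((a_i - t)/ε)`, and a factor
of order `k` is bounded by `(4/ε)^k`. Put `T = 4√(log(pn))`. Off the boundary strip one factor of
each product carries an extra `exp(-T²/4) = (pn)⁻⁴`. If `s` lies deep inside `A`, any coordinate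
with `m_i ≥ 1` does, because `Φ'`, `Φ''`, `Φ'''` decay like `exp(-x²/4)` and `s_i` is `εT`-far
from both endpoints. If `s` lies far outside `A`, a coordinate with `s_i ∉ [a_i - εT, b_i + εT]`
does for every order, order `0` by the sub-Gaussian (Chernoff) tail bound of `Φ`. Summing the
`p³` terms gives `64 p³ (pn)⁻⁴ ε⁻³ ≤ 64 / (ε³ p n)`.
-/

open Real Set ProbabilityTheory

lemma stdGaussianPDF_eq_gaussianPDFReal : stdGaussianPDF = gaussianPDFReal 0 1 := by
  ext x
  simp [stdGaussianPDF, gaussianPDFReal, div_eq_inv_mul]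

lemma continuous_stdGaussianPDF : Continuous stdGaussianPDF := by
  unfold stdGaussianPDF
  fun_prop

lemma integrable_stdGaussianPDF : Integrable stdGaussianPDF := by
  simpa [stdGaussianPDF_eq_gaussianPDFReal] using integrable_gaussianPDFReal 0 1

lemma stdGaussianCDF_eq_measureReal (x : ℝ) :
    stdGaussianCDF x = (gaussianReal 0 1).real (Iic x) := by
  rw [measureReal_def, gaussianReal_apply_eq_integral _ one_ne_zero,
    ENNReal.toReal_ofReal (setIntegral_nonneg measurableSet_Iic fun y _ ↦
      gaussianPDFReal_nonneg 0 1 y), stdGaussianCDF, stdGaussianPDF_eq_gaussianPDFReal]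

lemma stdGaussianCDF_mono : Monotone stdGaussianCDF := fun x y hxy ↦ by
  simp only [stdGaussianCDF_eq_measureReal]
  exact measureReal_mono (Iic_subset_Iic.2 hxy)

lemma stdGaussianCDF_nonneg (x : ℝ) : 0 ≤ stdGaussianCDF x := by
  rw [stdGaussianCDF_eq_measureReal]
  exact measureReal_nonneg

lemma stdGaussianCDF_le_one (x : ℝ) : stdGaussianCDF x ≤ 1 := by
  rw [stdGaussianCDF_eq_measureReal]
  exact measureReal_le_one

lemma hasSubgaussianMGF_id_gaussianReal : HasSubgaussianMGF id 1 (gaussianReal 0 1) where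
  integrable_exp_mul := integrable_exp_mul_gaussianReal
  mgf_le t := by simp [mgf_id_gaussianReal]

lemma one_sub_stdGaussianCDF_le {u x : ℝ} (hu : 0 ≤ u) (hux : u ≤ x) :
    1 - stdGaussianCDF x ≤ exp (-u ^ 2 / 2) := by
  rw [stdGaussianCDF_eq_measureReal, ← probReal_compl_eq_one_sub measurableSet_Iic, compl_Iic]
  calc (gaussianReal 0 1).real (Ioi x) ≤ (gaussianReal 0 1).real {y | u ≤ id y} :=
        measureReal_mono fun y (hy : x < y) ↦ hux.trans hy.le
    _ ≤ exp (-u ^ 2 / 2) := by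
        simpa using hasSubgaussianMGF_id_gaussianReal.measure_ge_le hu

lemma stdGaussianCDF_le {u x : ℝ} (hu : 0 ≤ u) (hxu : x ≤ -u) :
    stdGaussianCDF x ≤ exp (-u ^ 2 / 2) := by
  rw [stdGaussianCDF_eq_measureReal]
  calc (gaussianReal 0 1).real (Iic x) ≤ (gaussianReal 0 1).real {y | u ≤ (-id) y} :=
        measureReal_mono fun y (hy : y ≤ x) ↦ show u ≤ -y by linarith
    _ ≤ exp (-u ^ 2 / 2) := by
        simpa using hasSubgaussianMGF_id_gaussianReal.neg.measure_ge_le hu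

lemma hasDerivAt_stdGaussianCDF (x : ℝ) : HasDerivAt stdGaussianCDF (stdGaussianPDF x) x := by
  have hΦ : stdGaussianCDF = fun y ↦ stdGaussianCDF 0 + ∫ t in (0 : ℝ)..y, stdGaussianPDF t := by
    ext y
    rw [stdGaussianCDF, stdGaussianCDF, ← intervalIntegral.integral_Iic_sub_Iic
      integrable_stdGaussianPDF.integrableOn integrable_stdGaussianPDF.integrableOn]
    ring
  rw [hΦ]
  exact (intervalIntegral.integral_hasDerivAt_right integrable_stdGaussianPDF.intervalIntegrable
    continuous_stdGaussianPDF.stronglyMeasurable.stronglyMeasurableAtFilter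
    continuous_stdGaussianPDF.continuousAt).const_add _

lemma hasDerivAt_stdGaussianPDF (x : ℝ) :
    HasDerivAt stdGaussianPDF (-x * stdGaussianPDF x) x := by
  have hexponent : HasDerivAt (fun y : ℝ ↦ -y ^ 2 / 2) (-x) x :=
    ((hasDerivAt_pow 2 x).neg.div_const 2).congr_deriv (by ring)
  exact (hexponent.exp.div_const √(2 * π)).congr_deriv (by rw [stdGaussianPDF]; ring)

lemma one_add_sq_mul_stdGaussianPDF_le (x : ℝ) :
    (1 + x ^ 2) * stdGaussianPDF x ≤ 2 * exp (-x ^ 2 / 4) := by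
  have hπ : 2 ≤ √(2 * π) := le_sqrt_of_sq_le (by nlinarith [pi_gt_three])
  have hexp : 1 + x ^ 2 ≤ 4 * exp (x ^ 2 / 4) := by linarith [add_one_le_exp (x ^ 2 / 4)]
  have hsplit : exp (-x ^ 2 / 2) = exp (-x ^ 2 / 4) * exp (-x ^ 2 / 4) := by
    rw [← exp_add]; ring_nf
  have hcancel : exp (x ^ 2 / 4) * exp (-x ^ 2 / 4) = 1 := by
    rw [← exp_add]; ring_nf; exact exp_zero
  calc (1 + x ^ 2) * stdGaussianPDF x ≤ (1 + x ^ 2) * exp (-x ^ 2 / 2) / 2 := by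
        rw [stdGaussianPDF, mul_div_assoc]
        gcongr
    _ ≤ 4 * exp (x ^ 2 / 4) * exp (-x ^ 2 / 2) / 2 := by gcongr
    _ = 2 * exp (-x ^ 2 / 4) := by rw [hsplit]; linear_combination 2 * exp (-x ^ 2 / 4) * hcancel

/-- `Φ, Φ', Φ'', Φ'''`; every index `k ≥ 3` gives `Φ'''`. -/
noncomputable def stdGaussianCDFDeriv : ℕ → ℝ → ℝ
  | 0 => stdGaussianCDF
  | 1 => stdGaussianPDF
  | 2 => fun x ↦ -x * stdGaussianPDF x
  | _ => fun x ↦ (x ^ 2 - 1) * stdGaussianPDF x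

lemma hasDerivAt_stdGaussianCDFDeriv {k : ℕ} (hk : k ≤ 2) (x : ℝ) :
    HasDerivAt (stdGaussianCDFDeriv k) (stdGaussianCDFDeriv (k + 1) x) x := by
  interval_cases k
  · exact hasDerivAt_stdGaussianCDF x
  · exact hasDerivAt_stdGaussianPDF x
  · exact (((hasDerivAt_id x).neg).mul (hasDerivAt_stdGaussianPDF x)).congr_deriv
      (by simp only [stdGaussianCDFDeriv, Pi.neg_apply, id]; ring)

lemma abs_stdGaussianCDFDeriv_le {k : ℕ} (hk : 1 ≤ k) (x : ℝ) :
    |stdGaussianCDFDeriv k x| ≤ 2 * exp (-x ^ 2 / 4) := by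
  have hpdf := stdGaussianPDF_eq_gaussianPDFReal ▸ gaussianPDFReal_nonneg 0 1 x
  refine le_trans ?_ (one_add_sq_mul_stdGaussianPDF_le x)
  match k, hk with
  | 1, _ => simp only [stdGaussianCDFDeriv, abs_of_nonneg hpdf]; nlinarith [sq_nonneg x]
  | 2, _ =>
    simp only [stdGaussianCDFDeriv, abs_mul, abs_neg, abs_of_nonneg hpdf]
    gcongr
    nlinarith [sq_nonneg (|x| - 1), sq_abs x]
  | k + 3, _ =>
    simp only [stdGaussianCDFDeriv, abs_mul, abs_of_nonneg hpdf]
    gcongr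
    rw [abs_le]; constructor <;> nlinarith [sq_nonneg x]

/-- The `k`-th derivative (for `k ≤ 3`) of the factor `t ↦ Φ((b - t)/ε) - Φ((a - t)/ε)` of `φ_ε`. -/
noncomputable def boxFactorDeriv (ε a b : ℝ) (k : ℕ) (t : ℝ) : ℝ :=
  (-ε⁻¹) ^ k * (stdGaussianCDFDeriv k ((b - t) / ε) - stdGaussianCDFDeriv k ((a - t) / ε))

lemma hasDerivAt_boxFactorDeriv (ε a b : ℝ) {k : ℕ} (hk : k ≤ 2) (t : ℝ) :
    HasDerivAt (boxFactorDeriv ε a b k) (boxFactorDeriv ε a b (k + 1) t) t := by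
  have harg (c : ℝ) : HasDerivAt (fun y ↦ (c - y) / ε) (-ε⁻¹) t :=
    ((hasDerivAt_id t).const_sub c).div_const ε |>.congr_deriv (by ring)
  have hb := (hasDerivAt_stdGaussianCDFDeriv hk _).comp t (harg b)
  have ha := (hasDerivAt_stdGaussianCDFDeriv hk _).comp t (harg a)
  exact ((hb.sub ha).const_mul ((-ε⁻¹) ^ k)).congr_deriv (by simp only [boxFactorDeriv]; ring)

lemma abs_boxFactorDeriv_zero_le_one (ε a b t : ℝ) : |boxFactorDeriv ε a b 0 t| ≤ 1 := by
  simp only [boxFactorDeriv, stdGaussianCDFDeriv, pow_zero, one_mul]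
  exact abs_sub_le_of_nonneg_of_le (stdGaussianCDF_nonneg _) (stdGaussianCDF_le_one _)
    (stdGaussianCDF_nonneg _) (stdGaussianCDF_le_one _)

lemma abs_boxFactorDeriv_le_of_far {ε a b t T : ℝ} (hε : 0 < ε) (hT : 0 ≤ T) {k : ℕ}
    (hk : 1 ≤ k) (ha : ε * T ≤ |a - t|) (hb : ε * T ≤ |b - t|) :
    |boxFactorDeriv ε a b k t| ≤ exp (-T ^ 2 / 4) * (4 / ε) ^ k := by
  have hfar {c : ℝ} (hc : ε * T ≤ |c - t|) :
      |stdGaussianCDFDeriv k ((c - t) / ε)| ≤ 2 * exp (-T ^ 2 / 4) := by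
    have hT' : T ≤ |(c - t) / ε| := by rwa [abs_div, abs_of_pos hε, le_div_iff₀' hε]
    have hsq : T ^ 2 ≤ ((c - t) / ε) ^ 2 := by
      simpa only [sq_abs] using pow_le_pow_left₀ hT hT' 2
    refine (abs_stdGaussianCDFDeriv_le hk _).trans ?_
    gcongr 2 * exp ?_
    linarith
  have h4 : (4 : ℝ) ≤ 4 ^ k := le_self_pow₀ (by norm_num) (by omega)
  calc |boxFactorDeriv ε a b k t|
      ≤ ε⁻¹ ^ k * (|stdGaussianCDFDeriv k ((b - t) / ε)| +
          |stdGaussianCDFDeriv k ((a - t) / ε)|) := by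
        rw [boxFactorDeriv, abs_mul, abs_pow, abs_neg, abs_inv, abs_of_pos hε]
        gcongr
        exact abs_sub _ _
    _ ≤ ε⁻¹ ^ k * (4 * exp (-T ^ 2 / 4)) := by
        gcongr; linarith [hfar ha, hfar hb]
    _ ≤ 4 ^ k * ε⁻¹ ^ k * exp (-T ^ 2 / 4) := by
        rw [mul_comm (4 ^ k), mul_assoc]
        gcongr
    _ = exp (-T ^ 2 / 4) * (4 / ε) ^ k := by rw [div_eq_mul_inv 4 ε, mul_pow]; ring

lemma abs_boxFactorDeriv_le_pow {ε : ℝ} (hε : 0 < ε) (a b : ℝ) (k : ℕ) (t : ℝ) :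
    |boxFactorDeriv ε a b k t| ≤ (4 / ε) ^ k := by
  rcases Nat.eq_zero_or_pos k with rfl | hk
  · simpa using abs_boxFactorDeriv_zero_le_one ε a b t
  · simpa using abs_boxFactorDeriv_le_of_far (T := 0) hε le_rfl hk (by simp) (by simp)

lemma abs_boxFactorDeriv_le_of_outside {ε a b t T : ℝ} (hε : 0 < ε) (hT : 0 ≤ T) (hab : a ≤ b)
    (hout : t + ε * T ≤ a ∨ b + ε * T ≤ t) (k : ℕ) :
    |boxFactorDeriv ε a b k t| ≤ exp (-T ^ 2 / 4) * (4 / ε) ^ k := by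
  rcases Nat.eq_zero_or_pos k with rfl | hk
  · have hαβ : (a - t) / ε ≤ (b - t) / ε := by gcongr
    have hhalf : exp (-T ^ 2 / 2) ≤ exp (-T ^ 2 / 4) := exp_le_exp.2 (by nlinarith [sq_nonneg T])
    simp only [boxFactorDeriv, stdGaussianCDFDeriv, pow_zero, one_mul, mul_one]
    rw [abs_of_nonneg (sub_nonneg.2 (stdGaussianCDF_mono hαβ))]
    rcases hout with h | h
    · have hα : T ≤ (a - t) / ε := by rw [le_div_iff₀' hε]; linarith
      linarith [one_sub_stdGaussianCDF_le hT hα, stdGaussianCDF_le_one ((b - t) / ε)]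
    · have hβ : (b - t) / ε ≤ -T := by rw [div_le_iff₀' hε]; linarith
      linarith [stdGaussianCDF_le hT hβ, stdGaussianCDF_nonneg ((a - t) / ε)]
  · obtain ⟨ha, hb⟩ : ε * T ≤ |a - t| ∧ ε * T ≤ |b - t| := by
      rcases hout with h | h
      · exact ⟨le_abs.2 (Or.inl (by linarith)), le_abs.2 (Or.inl (by linarith))⟩
      · exact ⟨le_abs.2 (Or.inr (by linarith)), le_abs.2 (Or.inr (by linarith))⟩
    exact abs_boxFactorDeriv_le_of_far hε hT hk ha hb

lemma pderiv_prod_apply {p : ℕ} (f : Fin p → ℝ → ℝ) (f' : ℝ → ℝ) (j : Fin p) (s : Fin p → ℝ)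
    (hf : HasDerivAt (f j) (f' (s j)) (s j)) :
    pderiv j (fun s ↦ ∏ i, f i (s i)) s = ∏ i, Function.update f j f' i (s i) := by
  have hfun : (fun t ↦ ∏ i, f i (Function.update s j t i)) =
      fun t ↦ f j t * ∏ i ∈ Finset.univ.erase j, f i (s i) := by
    funext t
    rw [← Finset.mul_prod_erase _ _ (Finset.mem_univ j), Function.update_self]
    congr 1
    exact Finset.prod_congr rfl fun i hi ↦ by rw [Function.update_of_ne (Finset.ne_of_mem_erase hi)]
  rw [pderiv, hfun, (hf.mul_const _).deriv, ← Finset.mul_prod_erase _ _ (Finset.mem_univ j),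
    Function.update_self]
  congr 1
  exact Finset.prod_congr rfl fun i hi ↦ by rw [Function.update_of_ne (Finset.ne_of_mem_erase hi)]

lemma pderiv_prod_boxFactorDeriv {p : ℕ} (ε : ℝ) (a b : Fin p → ℝ) (m : Fin p → ℕ) (j : Fin p)
    (hm : m j ≤ 2) :
    pderiv j (fun s ↦ ∏ i, boxFactorDeriv ε (a i) (b i) (m i) (s i)) =
      fun s ↦ ∏ i, boxFactorDeriv ε (a i) (b i) ((m + Pi.single j 1 : Fin p → ℕ) i) (s i) := by
  funext s
  rw [pderiv_prod_apply _ (boxFactorDeriv ε (a j) (b j) (m j + 1)) j s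
    (hasDerivAt_boxFactorDeriv ε (a j) (b j) hm (s j))]
  refine Finset.prod_congr rfl fun i _ ↦ ?_
  rcases eq_or_ne i j with rfl | hij
  · simp
  · simp [hij]

lemma pderiv_pderiv_pderiv_smoothedInd {p : ℕ} (ε : ℝ) (a b : Fin p → ℝ) (j₁ j₂ j₃ : Fin p) :
    pderiv j₁ (pderiv j₂ (pderiv j₃ (smoothedInd ε a b))) = fun s ↦ ∏ i,
      boxFactorDeriv ε (a i) (b i)
        ((Pi.single j₃ 1 + Pi.single j₂ 1 + Pi.single j₁ 1 : Fin p → ℕ) i) (s i) := by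
  have h0 : smoothedInd ε a b =
      fun s ↦ ∏ i, boxFactorDeriv ε (a i) (b i) ((0 : Fin p → ℕ) i) (s i) := by
    funext s; simp [smoothedInd, boxFactorDeriv, stdGaussianCDFDeriv]
  rw [h0, pderiv_prod_boxFactorDeriv _ _ _ _ _ (by simp), zero_add,
    pderiv_prod_boxFactorDeriv _ _ _ _ _ (by simp [Pi.single_apply]; split_ifs <;> simp),
    pderiv_prod_boxFactorDeriv _ _ _ _ _ (by simp [Pi.single_apply]; split_ifs <;> simp)]

lemma abs_prod_le_mul_prod {ι : Type*} [Fintype ι] [DecidableEq ι] {f B : ι → ℝ} {E : ℝ}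
    (hB : ∀ i, |f i| ≤ B i) (j : ι) (hj : |f j| ≤ E * B j) : |∏ i, f i| ≤ E * ∏ i, B i := by
  rw [Finset.abs_prod, ← Finset.mul_prod_erase _ _ (Finset.mem_univ j),
    ← Finset.mul_prod_erase _ B (Finset.mem_univ j), ← mul_assoc]
  exact mul_le_mul hj (Finset.prod_le_prod (fun i _ ↦ abs_nonneg _) fun i _ ↦ hB i)
    (Finset.prod_nonneg fun i _ ↦ abs_nonneg _) ((abs_nonneg _).trans hj)

abbrev closedBox {p : ℕ} (a b : Fin p → ℝ) : Set (Fin p → ℝ) := {y | ∀ j, y j ∈ Icc (a j) (b j)}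

lemma add_le_and_add_le_of_mem_innerNbhd_closedBox {p : ℕ} {a b s : Fin p → ℝ} {δ : ℝ}
    (hδ : 0 ≤ δ) (hs : s ∈ innerNbhd (closedBox a b) δ) (i : Fin p) :
    a i + δ ≤ s i ∧ s i + δ ≤ b i := by
  have hshift (x : ℝ) (hx : |x| ≤ δ) : a i ≤ s i + x ∧ s i + x ≤ b i := by
    have hmem : Function.update s i (s i + x) ∈ Metric.closedBall s δ := by
      refine (dist_pi_le_iff hδ).2 fun k ↦ ?_
      rcases eq_or_ne k i with rfl | hk
      · simpa [Real.dist_eq] using hx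
      · simpa [Function.update_of_ne hk] using hδ
    simpa using hs.2 hmem i
  exact ⟨by linarith [(hshift (-δ) (by rw [abs_neg, abs_of_nonneg hδ])).1],
    (hshift δ (abs_of_nonneg hδ).le).2⟩

lemma exists_add_lt_or_add_lt_of_lt_infDist_closedBox {p : ℕ} {a b s : Fin p → ℝ} {δ : ℝ}
    (hδ : 0 ≤ δ) (hab : ∀ i, a i ≤ b i) (hs : δ < Metric.infDist s (closedBox a b)) :
    ∃ j, s j + δ < a j ∨ b j + δ < s j := by
  have hw : δ < dist s fun i ↦ max (a i) (min (s i) (b i)) :=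
    hs.trans_le (Metric.infDist_le_dist_of_mem fun i ↦
      ⟨le_max_left _ _, max_le (hab i) (min_le_right _ _)⟩)
  by_contra! h
  refine hw.not_ge ((dist_pi_le_iff hδ).2 fun j ↦ ?_)
  have := hab j
  obtain ⟨ha, hb⟩ := h j
  rw [Real.dist_eq, abs_le]
  constructor <;> grind

lemma closedBox_dichotomy_of_notMem_bdry {p : ℕ} {a b s : Fin p → ℝ} {δ : ℝ} (hδ : 0 ≤ δ)
    (hs : s ∉ bdry (closedBox a b) δ) :
    (∀ i, a i ≤ b i) ∧
      ((∀ i, a i + δ ≤ s i ∧ s i + δ ≤ b i) ∨ ∃ j, s j + δ < a j ∨ b j + δ < s j) := by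
  by_cases hout : s ∈ outerNbhd (closedBox a b) δ
  · have hin := add_le_and_add_le_of_mem_innerNbhd_closedBox hδ (not_not.1 fun h ↦ hs ⟨hout, h⟩)
    exact ⟨fun i ↦ by linarith [hin i], Or.inl hin⟩
  · have hinf : δ < Metric.infDist s (closedBox a b) := not_le.1 hout
    obtain ⟨y, hy⟩ : (closedBox a b).Nonempty := by
      by_contra h
      rw [not_nonempty_iff_eq_empty.1 h, Metric.infDist_empty] at hinf
      linarith
    have hab (i : Fin p) : a i ≤ b i := (hy i).1.trans (hy i).2
    exact ⟨hab, Or.inr (exists_add_lt_or_add_lt_of_lt_infDist_closedBox hδ hab hinf)⟩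

lemma abs_pderiv_pderiv_pderiv_smoothedInd_le {p : ℕ} {ε T : ℝ} (hε : 0 < ε) (hT : 0 ≤ T)
    {a b s : Fin p → ℝ} (hs : s ∉ bdry (closedBox a b) (ε * T)) (j₁ j₂ j₃ : Fin p) :
    |pderiv j₁ (pderiv j₂ (pderiv j₃ (smoothedInd ε a b))) s| ≤
      exp (-T ^ 2 / 4) * (4 / ε) ^ 3 := by
  set m : Fin p → ℕ := Pi.single j₃ 1 + Pi.single j₂ 1 + Pi.single j₁ 1
  have hm : ∑ i, m i = 3 := by simp [m, Finset.sum_add_distrib]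
  rw [pderiv_pderiv_pderiv_smoothedInd, show (4 / ε) ^ 3 = ∏ i, (4 / ε) ^ m i by
    rw [Finset.prod_pow_eq_pow_sum, hm]]
  change |∏ i, boxFactorDeriv ε (a i) (b i) (m i) (s i)| ≤ _
  obtain ⟨hab, hin | ⟨j, hout⟩⟩ := closedBox_dichotomy_of_notMem_bdry (by positivity) hs
  · refine abs_prod_le_mul_prod (fun i ↦ abs_boxFactorDeriv_le_pow hε _ _ _ _) j₁ ?_
    refine abs_boxFactorDeriv_le_of_far hε hT (by simp [m]) ?_ ?_
    · exact le_abs.2 (Or.inr (by linarith [hin j₁]))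
    · exact le_abs.2 (Or.inl (by linarith [hin j₁]))
  · refine abs_prod_le_mul_prod (fun i ↦ abs_boxFactorDeriv_le_pow hε _ _ _ _) j ?_
    exact abs_boxFactorDeriv_le_of_outside hε hT (hab j) (hout.imp le_of_lt le_of_lt) _

lemma pow_four_mul_exp_neg_four_mul_Log_le_one {x : ℝ} (hx : 0 < x) :
    x ^ 4 * exp (-(4 * Log x)) ≤ 1 := by
  rw [exp_neg, mul_inv_le_iff₀ (exp_pos _), one_mul, show 4 * Log x = (4 : ℕ) * Log x by norm_num,
    exp_nat_mul]
  exact pow_le_pow_left₀ hx.le ((exp_log hx).symm.le.trans (exp_le_exp.2 (le_max_left _ _))) 4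

/-- There is an absolute constant `c > 0` such that for all `n, p ≥ 1`, `ε > 0`, with
`ε̄ = 4ε√(log(pn))` and `A = ∏_j [a_j, b_j]`: for every `s ∉ ∂A(ε̄)`,
`‖∇³φ_ε(s, A)‖₁ ≤ c/(ε³ p n)`. -/
theorem stmt12 : ∃ c : ℝ, 0 < c ∧ ∀ (n p : ℕ), 1 ≤ n → 1 ≤ p → ∀ ε : ℝ, 0 < ε →
    ∀ a b s : Fin p → ℝ,
      s ∉ bdry {y : Fin p → ℝ | ∀ j, y j ∈ Set.Icc (a j) (b j)}
          (4 * ε * Real.sqrt (Log ((p : ℝ) * n))) →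
      ∑ j₁ : Fin p, ∑ j₂ : Fin p, ∑ j₃ : Fin p,
          |pderiv j₁ (pderiv j₂ (pderiv j₃ (smoothedInd ε a b))) s| ≤
        c / (ε ^ 3 * p * n) := by
  refine ⟨64, by norm_num, fun n p hn hp ε hε a b s hs ↦ ?_⟩
  set L := Log ((p : ℝ) * n)
  have hp0 : (0 : ℝ) < p := by exact_mod_cast hp
  have hn1 : (1 : ℝ) ≤ n := by exact_mod_cast hn
  rw [show 4 * ε * √L = ε * (4 * √L) by ring] at hs
  have hterm := abs_pderiv_pderiv_pderiv_smoothedInd_le hε (by positivity) hs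
  have hL : 0 ≤ L := zero_le_one.trans (le_max_right _ _)
  rw [mul_pow, sq_sqrt hL, show -(4 ^ 2 * L) / 4 = -(4 * L) by ring] at hterm
  have hdecay : (p : ℝ) ^ 4 * n * exp (-(4 * L)) ≤ 1 :=
    calc (p : ℝ) ^ 4 * n * exp (-(4 * L)) ≤ ((p : ℝ) * n) ^ 4 * exp (-(4 * L)) := by
          rw [mul_pow (p : ℝ)]; gcongr; exact le_self_pow₀ hn1 (by norm_num : 4 ≠ 0)
      _ ≤ 1 := pow_four_mul_exp_neg_four_mul_Log_le_one (by positivity)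
  calc ∑ j₁ : Fin p, ∑ j₂ : Fin p, ∑ j₃ : Fin p,
        |pderiv j₁ (pderiv j₂ (pderiv j₃ (smoothedInd ε a b))) s|
      ≤ ∑ _j₁ : Fin p, ∑ _j₂ : Fin p, ∑ _j₃ : Fin p, exp (-(4 * L)) * (4 / ε) ^ 3 :=
        Finset.sum_le_sum fun j₁ _ ↦ Finset.sum_le_sum fun j₂ _ ↦
          Finset.sum_le_sum fun j₃ _ ↦ hterm j₁ j₂ j₃
    _ = 64 * ((p : ℝ) ^ 4 * n * exp (-(4 * L))) / (ε ^ 3 * p * n) := by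
        simp only [Finset.sum_const, Finset.card_univ, Fintype.card_fin, nsmul_eq_mul]
        field_simp
        ring
    _ ≤ 64 / (ε ^ 3 * p * n) := by gcongr; linarith
end
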